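/- For every natural number n ≥ 1, n·e(n) = −Σ_{i=0}^{n−1} σ(n−i)·e(i). -/
import Mathlib

def e (n : ℕ) : ℤ :=
  ∑ k ∈ Finset.range (2 * n + 2),
    if 2 * n = 3 * k ^ 2 - k ∨ 2 * n = 3 * k ^ 2 + k then (-1) ^ (k + 1) else 0

/-- The sum of the positive divisors of `k`. -/
def sigma (k : ℕ) : ℕ := ∑ d ∈ k.divisors, d

open Finset

/-- Signed count of partitions of `m` into distinct (positive) parts. -/
def pc (m : ℕ) : ℤ :=
  ∑ S ∈ (Finset.Icc 1 m).powerset.filter (fun S => S.sum id = m), (-1) ^ S.card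

def BB (n : ℕ) : Finset (Finset ℕ × ℕ × ℕ) :=
  ((Finset.Icc 1 n).powerset ×ˢ (Finset.Icc 1 n ×ˢ Finset.range (n+1))).filter
    (fun x => (x.2.2 = 0 ∧ x.2.1 ∈ x.1 ∧ x.1.sum id = n) ∨
      (1 ≤ x.2.2 ∧ x.1.sum id + x.2.1 * x.2.2 = n))

def w (x : Finset ℕ × ℕ × ℕ) : ℤ := (x.2.1 : ℤ) * (-1) ^ x.1.card

def phi (x : Finset ℕ × ℕ × ℕ) : Finset ℕ × ℕ × ℕ :=
  if x.2.2 = 0 then (x.1.erase x.2.1, x.2.1, 1)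
  else if x.2.1 ∈ x.1 then (x.1.erase x.2.1, x.2.1, x.2.2+1)
  else if x.2.2 = 1 then (insert x.2.1 x.1, x.2.1, 0)
  else (insert x.2.1 x.1, x.2.1, x.2.2-1)

lemma mem_BB {n : ℕ} {T : Finset ℕ} {d q : ℕ} :
    (T, d, q) ∈ BB n ↔ (T ⊆ Finset.Icc 1 n ∧ (1 ≤ d ∧ d ≤ n) ∧ q < n + 1) ∧
      ((q = 0 ∧ d ∈ T ∧ ∑ x ∈ T, x = n) ∨
       (1 ≤ q ∧ (∑ x ∈ T, x) + d * q = n)) := by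
  simp [BB, Finset.mem_filter, Finset.mem_product, and_assoc, id_eq]

lemma phi_def {T : Finset ℕ} {d q : ℕ} :
    phi (T, d, q) = if q = 0 then (T.erase d, d, 1)
      else if d ∈ T then (T.erase d, d, q+1)
      else if q = 1 then (insert d T, d, 0)
      else (insert d T, d, q-1) := rfl

lemma sum_BB_eq_zero (n : ℕ) (hn : 1 ≤ n) : ∑ x ∈ BB n, w x = 0 := by
  apply Finset.sum_involution (fun x _ => phi x)
  · -- weights cancel
    rintro ⟨T, d, q⟩ ha
    rw [mem_BB] at ha
    obtain ⟨-, hP⟩ := ha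
    rw [phi_def]
    show (d:ℤ) * (-1) ^ T.card + w _ = 0
    by_cases h0 : q = 0
    · have hd : d ∈ T := by
        rcases hP with ⟨-, hd, -⟩ | ⟨h1, -⟩
        · exact hd
        · omega
      rw [if_pos h0]
      show (d:ℤ) * (-1) ^ T.card + (d:ℤ) * (-1) ^ (T.erase d).card = 0
      rw [← Finset.card_erase_add_one hd, pow_succ]
      ring
    · rw [if_neg h0]
      by_cases hd : d ∈ T
      · rw [if_pos hd]
        show (d:ℤ) * (-1) ^ T.card + (d:ℤ) * (-1) ^ (T.erase d).card = 0
        rw [← Finset.card_erase_add_one hd, pow_succ]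
        ring
      · rw [if_neg hd]
        have hcard : (insert d T).card = T.card + 1 := Finset.card_insert_of_notMem hd
        by_cases h1 : q = 1
        · rw [if_pos h1]
          show (d:ℤ) * (-1) ^ T.card + (d:ℤ) * (-1) ^ (insert d T).card = 0
          rw [hcard, pow_succ]; ring
        · rw [if_neg h1]
          show (d:ℤ) * (-1) ^ T.card + (d:ℤ) * (-1) ^ (insert d T).card = 0
          rw [hcard, pow_succ]; ring
  · -- phi x ≠ x
    rintro ⟨T, d, q⟩ ha -
    rw [mem_BB] at ha
    obtain ⟨-, hP⟩ := ha
    rw [phi_def]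
    by_cases h0 : q = 0
    · have hd : d ∈ T := by
        rcases hP with ⟨-, hd, -⟩ | ⟨h1, -⟩
        · exact hd
        · omega
      rw [if_pos h0]
      intro h
      exact (Finset.erase_ne_self.mpr hd) (congrArg Prod.fst h)
    · rw [if_neg h0]
      by_cases hd : d ∈ T
      · rw [if_pos hd]
        intro h
        exact (Finset.erase_ne_self.mpr hd) (congrArg Prod.fst h)
      · rw [if_neg hd]
        by_cases h1 : q = 1
        · rw [if_pos h1]
          intro h
          exact (Finset.insert_ne_self.mpr hd) (congrArg Prod.fst h)
        · rw [if_neg h1]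
          intro h
          exact (Finset.insert_ne_self.mpr hd) (congrArg Prod.fst h)
  · -- phi x ∈ BB n
    rintro ⟨T, d, q⟩ ha
    rw [mem_BB] at ha
    obtain ⟨⟨hT, hd1, hq⟩, hP⟩ := ha
    rw [phi_def]
    by_cases h0 : q = 0
    · have hd : d ∈ T ∧ ∑ x ∈ T, x = n := by
        rcases hP with ⟨-, hd, hs⟩ | ⟨h1, -⟩
        · exact ⟨hd, hs⟩
        · omega
      rw [if_pos h0, mem_BB]
      have hsum : (∑ x ∈ T.erase d, x) + d = ∑ x ∈ T, x := by
        have := Finset.sum_erase_add T id hd.1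
        simpa [id_eq] using this
      exact ⟨⟨(Finset.erase_subset d T).trans hT, hd1, by omega⟩,
        Or.inr ⟨le_refl 1, by omega⟩⟩
    · rw [if_neg h0]
      have hP' : 1 ≤ q ∧ (∑ x ∈ T, x) + d * q = n := by
        rcases hP with ⟨h, -⟩ | h
        · omega
        · exact h
      obtain ⟨hq1, hsum⟩ := hP'
      by_cases hd : d ∈ T
      · rw [if_pos hd, mem_BB]
        have hsum2 : (∑ x ∈ T.erase d, x) + d = ∑ x ∈ T, x := by
          have := Finset.sum_erase_add T id hd
          simpa [id_eq] using this
        have hmul : d * (q+1) = d * q + d := by ring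
        have hqn : q + 1 ≤ n := by
          have h1 : q + 1 ≤ d * (q+1) := Nat.le_mul_of_pos_left _ (by omega)
          omega
        exact ⟨⟨(Finset.erase_subset d T).trans hT, hd1, by omega⟩,
          Or.inr ⟨by omega, by omega⟩⟩
      · have hdIcc : d ∈ Finset.Icc 1 n := by simp [Finset.mem_Icc]; omega
        have hins : (insert d T) ⊆ Finset.Icc 1 n := Finset.insert_subset hdIcc hT
        have hsum3 : (∑ x ∈ insert d T, x) = d + ∑ x ∈ T, x := Finset.sum_insert hd
        rw [if_neg hd]
        by_cases h1 : q = 1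
        · rw [if_pos h1, mem_BB]
          subst h1
          refine ⟨⟨hins, hd1, by omega⟩, Or.inl ⟨rfl, Finset.mem_insert_self d T, by omega⟩⟩
        · rw [if_neg h1, mem_BB]
          have hmul : d * q = d * (q - 1) + d := by
            have h2 : q - 1 + 1 = q := by omega
            calc d * q = d * (q - 1 + 1) := by rw [h2]
            _ = d * (q-1) + d := by ring
          exact ⟨⟨hins, hd1, by omega⟩, Or.inr ⟨by omega, by omega⟩⟩
  · -- phi (phi x) = x
    rintro ⟨T, d, q⟩ ha
    rw [mem_BB] at ha
    obtain ⟨-, hP⟩ := ha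
    by_cases h0 : q = 0
    · have hd : d ∈ T := by
        rcases hP with ⟨-, hd, -⟩ | ⟨h1, -⟩
        · exact hd
        · omega
      have hx : phi (T, d, q) = (T.erase d, d, 1) := by rw [phi_def, if_pos h0]
      rw [hx, phi_def, if_neg (by omega : ¬ (1:ℕ) = 0), if_neg (Finset.notMem_erase d T),
        if_pos rfl, Finset.insert_erase hd, h0]
    · by_cases hd : d ∈ T
      · have hx : phi (T, d, q) = (T.erase d, d, q+1) := by
          rw [phi_def, if_neg h0, if_pos hd]
        rw [hx, phi_def, if_neg (by omega : ¬ q + 1 = 0), if_neg (Finset.notMem_erase d T),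
          if_neg (by omega : ¬ q + 1 = 1), Finset.insert_erase hd]
        simp
      · by_cases h1 : q = 1
        · have hx : phi (T, d, q) = (insert d T, d, 0) := by
            rw [phi_def, if_neg h0, if_neg hd, if_pos h1]
          rw [hx, phi_def, if_pos rfl, Finset.erase_insert hd, h1]
        · have hx : phi (T, d, q) = (insert d T, d, q-1) := by
            rw [phi_def, if_neg h0, if_neg hd, if_neg h1]
          rw [hx, phi_def, if_neg (by omega : ¬ q - 1 = 0),
            if_pos (Finset.mem_insert_self d T), Finset.erase_insert hd]
          have h2 : q - 1 + 1 = q := by omega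
          rw [h2]

lemma sum_if_const {α : Type*} {s : Finset α} {C : Prop} [Decidable C] (f : α → ℤ) :
    (∑ d ∈ s, if C then f d else 0) = if C then ∑ d ∈ s, f d else 0 := by
  split_ifs <;> simp

lemma Hdiv (n i : ℕ) (hn : 1 ≤ n) :
    (∑ d ∈ Finset.Icc 1 n, ∑ q ∈ Finset.range (n+1),
      (if 1 ≤ q ∧ i + d * q = n then (d:ℤ) else 0))
    = if i < n then (sigma (n-i) : ℤ) else 0 := by
  by_cases hin : i < n
  · rw [if_pos hin]
    have hk1 : 1 ≤ n - i := by omega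
    have inner : ∀ d ∈ Finset.Icc 1 n,
        (∑ q ∈ Finset.range (n+1), if 1 ≤ q ∧ i + d * q = n then (d:ℤ) else 0)
        = if d ∣ (n - i) then (d:ℤ) else 0 := by
      intro d hd
      rw [Finset.mem_Icc] at hd
      by_cases hdvd : d ∣ (n - i)
      · rw [if_pos hdvd]
        have hdk : d ≤ n - i := Nat.le_of_dvd (by omega) hdvd
        rw [Finset.sum_eq_single_of_mem ((n-i) / d)]
        · rw [if_pos]
          refine ⟨Nat.div_pos hdk (by omega), ?_⟩
          rw [Nat.mul_div_cancel' hdvd]; omega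
        · rw [Finset.mem_range]
          have := Nat.div_le_self (n-i) d; omega
        · intro b hb hbne
          rw [if_neg]
          rintro ⟨hb1, hbeq⟩
          apply hbne
          have hdb : d * b = n - i := by omega
          rw [← hdb, Nat.mul_div_cancel_left _ (by omega : 0 < d)]
      · rw [if_neg hdvd]
        apply Finset.sum_eq_zero
        intro q hq
        rw [if_neg]
        rintro ⟨h1, h2⟩
        exact hdvd ⟨q, by omega⟩
    rw [Finset.sum_congr rfl inner, ← Finset.sum_filter]
    have hset : (Finset.Icc 1 n).filter (fun d => d ∣ (n-i)) = (n-i).divisors := by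
      ext d
      rw [Finset.mem_filter, Finset.mem_Icc, Nat.mem_divisors]
      constructor
      · rintro ⟨⟨h1, h2⟩, h3⟩
        exact ⟨h3, by omega⟩
      · rintro ⟨h3, h4⟩
        have h5 := Nat.le_of_dvd (by omega) h3
        have h6 := Nat.pos_of_dvd_of_pos h3 (by omega)
        exact ⟨⟨h6, by omega⟩, h3⟩
    rw [hset, sigma]
    push_cast
    rfl
  · rw [if_neg hin]
    apply Finset.sum_eq_zero
    intro d hd
    apply Finset.sum_eq_zero
    intro q hq
    rw [Finset.mem_Icc] at hd
    rw [if_neg]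
    rintro ⟨h1, h2⟩
    have : 1 ≤ d * q := Nat.mul_pos (by omega) (by omega)
    omega

lemma perT (n : ℕ) (hn : 1 ≤ n) (T : Finset ℕ) (hT : T ⊆ Finset.Icc 1 n) :
    (∑ d ∈ Finset.Icc 1 n, ∑ q ∈ Finset.range (n+1),
      (if ((q = 0 ∧ d ∈ T ∧ T.sum id = n) ∨ (1 ≤ q ∧ T.sum id + d * q = n))
        then (d:ℤ) * (-1)^T.card else 0))
    = (if T.sum id = n then (n:ℤ) * (-1)^T.card else 0)
      + (if T.sum id < n then (sigma (n - T.sum id) : ℤ) else 0) * (-1)^T.card := by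
  have split : ∀ d ∈ Finset.Icc 1 n, ∀ q ∈ Finset.range (n+1),
      (if ((q = 0 ∧ d ∈ T ∧ T.sum id = n) ∨ (1 ≤ q ∧ T.sum id + d * q = n))
        then (d:ℤ) * (-1)^T.card else 0)
      = (if (q = 0 ∧ d ∈ T ∧ T.sum id = n) then (d:ℤ) * (-1)^T.card else 0)
        + (if (1 ≤ q ∧ T.sum id + d * q = n) then (d:ℤ) * (-1)^T.card else 0) := by
    intro d hd q hq
    by_cases hp : (q = 0 ∧ d ∈ T ∧ T.sum id = n)
    · have hq' : ¬(1 ≤ q ∧ T.sum id + d * q = n) := fun h => by omega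
      rw [if_pos (Or.inl hp), if_pos hp, if_neg hq', add_zero]
    · by_cases hq' : (1 ≤ q ∧ T.sum id + d * q = n)
      · rw [if_pos (Or.inr hq'), if_neg hp, if_pos hq', zero_add]
      · rw [if_neg (by tauto), if_neg hp, if_neg hq', add_zero]
  calc (∑ d ∈ Finset.Icc 1 n, ∑ q ∈ Finset.range (n+1),
      (if ((q = 0 ∧ d ∈ T ∧ T.sum id = n) ∨ (1 ≤ q ∧ T.sum id + d * q = n))
        then (d:ℤ) * (-1)^T.card else 0))
      = ∑ d ∈ Finset.Icc 1 n, ∑ q ∈ Finset.range (n+1),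
        ((if (q = 0 ∧ d ∈ T ∧ T.sum id = n) then (d:ℤ) * (-1)^T.card else 0)
        + (if (1 ≤ q ∧ T.sum id + d * q = n) then (d:ℤ) * (-1)^T.card else 0)) := by
        exact Finset.sum_congr rfl (fun d hd => Finset.sum_congr rfl (fun q hq => split d hd q hq))
    _ = (∑ d ∈ Finset.Icc 1 n, ∑ q ∈ Finset.range (n+1),
          (if (q = 0 ∧ d ∈ T ∧ T.sum id = n) then (d:ℤ) * (-1)^T.card else 0))
        + (∑ d ∈ Finset.Icc 1 n, ∑ q ∈ Finset.range (n+1),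
          (if (1 ≤ q ∧ T.sum id + d * q = n) then (d:ℤ) * (-1)^T.card else 0)) := by
        rw [← Finset.sum_add_distrib]
        exact Finset.sum_congr rfl (fun d hd => by rw [← Finset.sum_add_distrib])
    _ = (if T.sum id = n then (n:ℤ) * (-1)^T.card else 0)
      + (if T.sum id < n then (sigma (n - T.sum id) : ℤ) else 0) * (-1)^T.card := by
        congr 1
        · -- first piece
          have hinner : ∀ d ∈ Finset.Icc 1 n,
              (∑ q ∈ Finset.range (n+1),
                (if (q = 0 ∧ d ∈ T ∧ T.sum id = n) then (d:ℤ) * (-1)^T.card else 0))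
              = if T.sum id = n then (if d ∈ T then (d:ℤ) * (-1)^T.card else 0) else 0 := by
            intro d hd
            have h1 : ∀ q, (if (q = 0 ∧ d ∈ T ∧ T.sum id = n) then (d:ℤ) * (-1)^T.card else 0)
                = if q = 0 then (if T.sum id = n then (if d ∈ T then (d:ℤ) * (-1)^T.card else 0) else 0) else 0 := by
              intro q
              by_cases h2 : q = 0 <;> by_cases h3 : d ∈ T <;> by_cases h4 : T.sum id = n <;> simp_all
            rw [Finset.sum_congr rfl (fun q _ => h1 q)]
            rw [Finset.sum_ite_eq' (Finset.range (n+1)) 0]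
            rw [if_pos (Finset.mem_range.mpr (by omega))]
          rw [Finset.sum_congr rfl hinner, sum_if_const]
          split_ifs with h
          · rw [Finset.sum_ite_mem, Finset.inter_eq_right.mpr hT, ← Finset.sum_mul]
            have : (∑ d ∈ T, (d:ℤ)) = ((T.sum id : ℕ) : ℤ) := by
              rw [Nat.cast_sum]; simp [id_eq]
            rw [this, h]
          · rfl
        · -- second piece
          have h1 : ∀ d ∈ Finset.Icc 1 n, ∀ q ∈ Finset.range (n+1),
              (if (1 ≤ q ∧ T.sum id + d * q = n) then (d:ℤ) * (-1)^T.card else 0)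
              = (if (1 ≤ q ∧ T.sum id + d * q = n) then (d:ℤ) else 0) * (-1)^T.card := by
            intro d _ q _
            rw [ite_mul, zero_mul]
          rw [Finset.sum_congr rfl (fun d hd => Finset.sum_congr rfl (fun q hq => h1 d hd q hq))]
          have h2 : ∀ d ∈ Finset.Icc 1 n,
              (∑ q ∈ Finset.range (n+1),
                (if (1 ≤ q ∧ T.sum id + d * q = n) then (d:ℤ) else 0) * (-1)^T.card)
              = (∑ q ∈ Finset.range (n+1),
                (if (1 ≤ q ∧ T.sum id + d * q = n) then (d:ℤ) else 0)) * (-1)^T.card := by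
            intro d _
            rw [Finset.sum_mul]
          rw [Finset.sum_congr rfl h2, ← Finset.sum_mul, Hdiv n (T.sum id) hn]

lemma shrink (i n : ℕ) (h : i ≤ n) :
    (Finset.Icc 1 n).powerset.filter (fun S => S.sum id = i)
    = (Finset.Icc 1 i).powerset.filter (fun S => S.sum id = i) := by
  ext S
  simp only [Finset.mem_filter, Finset.mem_powerset]
  constructor
  · rintro ⟨hsub, hsum⟩
    refine ⟨fun x hx => ?_, hsum⟩
    rw [Finset.mem_Icc]
    have h1 := hsub hx
    rw [Finset.mem_Icc] at h1
    have h2 : id x ≤ S.sum id := Finset.single_le_sum (fun i _ => Nat.zero_le _) hx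
    have h3 : x ≤ S.sum id := h2
    have h4 : S.sum id = i := hsum
    omega
  · rintro ⟨hsub, hsum⟩
    exact ⟨hsub.trans (Finset.Icc_subset_Icc_right h), hsum⟩

lemma BB_decomp (n : ℕ) (hn : 1 ≤ n) :
    ∑ x ∈ BB n, w x = (n : ℤ) * pc n + ∑ i ∈ Finset.range n, (sigma (n-i) : ℤ) * pc i := by
  rw [BB, Finset.sum_filter, Finset.sum_product]
  simp only [Finset.sum_product]
  dsimp only [w]
  rw [Finset.sum_congr rfl (fun T hT => perT n hn T (Finset.mem_powerset.mp hT))]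
  rw [Finset.sum_add_distrib]
  congr 1
  · rw [pc, Finset.sum_filter, Finset.mul_sum]
    exact Finset.sum_congr rfl (fun T _ => by rw [mul_ite, mul_zero])
  · have hstep : ∀ T ∈ (Finset.Icc 1 n).powerset,
        (if T.sum id < n then (sigma (n - T.sum id) : ℤ) else 0) * (-1)^T.card
        = if T.sum id < n then (sigma (n - T.sum id) : ℤ) * (-1)^T.card else 0 := by
      intro T _
      rw [ite_mul, zero_mul]
    rw [Finset.sum_congr rfl hstep, ← Finset.sum_filter]
    have hfib := Finset.sum_fiberwise_of_maps_to
      (s := (Finset.Icc 1 n).powerset.filter (fun T => T.sum id < n))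
      (t := Finset.range n) (g := fun T : Finset ℕ => T.sum id)
      (fun T hT => Finset.mem_range.mpr (Finset.mem_filter.mp hT).2)
      (fun T : Finset ℕ => (sigma (n - T.sum id) : ℤ) * (-1)^T.card)
    rw [← hfib]
    apply Finset.sum_congr rfl
    intro i hi
    rw [Finset.mem_range] at hi
    rw [Finset.filter_filter]
    have hfe : (Finset.Icc 1 n).powerset.filter (fun T => T.sum id < n ∧ T.sum id = i)
        = (Finset.Icc 1 n).powerset.filter (fun T => T.sum id = i) :=
      Finset.filter_congr (fun T _ => ⟨fun h => h.2, fun h => ⟨by omega, h⟩⟩)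
    rw [hfe, shrink i n (by omega), pc, Finset.mul_sum]
    apply Finset.sum_congr rfl
    intro T hT
    rw [Finset.mem_filter] at hT
    rw [hT.2]

lemma pc_rec (n : ℕ) (hn : 1 ≤ n) :
    (n : ℤ) * pc n = - ∑ i ∈ Finset.range n, (sigma (n-i) : ℤ) * pc i := by
  have h0 := sum_BB_eq_zero n hn
  rw [BB_decomp n hn] at h0
  linarith

/-! ### Franklin involution -/

def tval (M : ℕ) (S : Finset ℕ) : ℕ :=
  Nat.find (p := fun d => 0 < d ∧ ((M - d) ∉ S ∨ M < d))
    ⟨M+1, Nat.succ_pos M, Or.inr (Nat.lt_succ_self M)⟩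

def Amove (S : Finset ℕ) (M s : ℕ) : Finset ℕ := insert (M+1) ((S.erase s).erase (M - s + 1))

def Bmove (S : Finset ℕ) (M t : ℕ) : Finset ℕ := insert t (insert (M - t) (S.erase M))

def g (S : Finset ℕ) : Finset ℕ :=
  if hS : S.Nonempty then
    if S.min' hS ≤ tval (S.max' hS) S then Amove S (S.max' hS) (S.min' hS)
    else Bmove S (S.max' hS) (tval (S.max' hS) S)
  else ∅

def Exc (S : Finset ℕ) : Prop :=
  ∃ a : ℕ, 1 ≤ a ∧ (S = Finset.Icc a (2*a - 1) ∨ S = Finset.Icc (a+1) (2*a))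

lemma g_eq_A {S : Finset ℕ} (hS : S.Nonempty) (h : S.min' hS ≤ tval (S.max' hS) S) :
    g S = Amove S (S.max' hS) (S.min' hS) := by
  rw [g, dif_pos hS, if_pos h]

lemma g_eq_B {S : Finset ℕ} (hS : S.Nonempty) (h : ¬ S.min' hS ≤ tval (S.max' hS) S) :
    g S = Bmove S (S.max' hS) (tval (S.max' hS) S) := by
  rw [g, dif_pos hS, if_neg h]

lemma tval_spec' (M : ℕ) (S : Finset ℕ) :
    0 < tval M S ∧ ((M - tval M S) ∉ S ∨ M < tval M S) := by
  rw [tval]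
  exact Nat.find_spec (p := fun d => 0 < d ∧ ((M - d) ∉ S ∨ M < d))
    ⟨M+1, Nat.succ_pos M, Or.inr (Nat.lt_succ_self M)⟩

lemma tval_pos (M : ℕ) (S : Finset ℕ) : 0 < tval M S := (tval_spec' M S).1

lemma tval_spec (M : ℕ) (S : Finset ℕ) : (M - tval M S) ∉ S ∨ M < tval M S :=
  (tval_spec' M S).2

lemma tval_min (M : ℕ) (S : Finset ℕ) {d : ℕ} (hd : 0 < d) (h : d < tval M S) :
    (M - d) ∈ S ∧ d ≤ M := by
  have h2 : ¬(0 < d ∧ ((M - d) ∉ S ∨ M < d)) := by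
    rw [tval] at h
    exact Nat.find_min _ h
  simp only [not_and, not_or, not_not, not_lt] at h2
  exact h2 hd

lemma tval_le {M : ℕ} (S : Finset ℕ) (h0 : 0 ∉ S) (hM : 1 ≤ M) : tval M S ≤ M := by
  rw [tval]
  exact Nat.find_le ⟨hM, Or.inl (by simpa using h0)⟩

lemma tval_notMem {M : ℕ} (S : Finset ℕ) (h0 : 0 ∉ S) (hM : 1 ≤ M) :
    (M - tval M S) ∉ S := by
  rcases tval_spec M S with h | h
  · exact h
  · have := tval_le S h0 hM; omega

lemma tval_stair {M : ℕ} {S : Finset ℕ} (hM : M ∈ S) {x : ℕ}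
    (h1 : M - tval M S < x) (h2 : x ≤ M) : x ∈ S := by
  rcases Nat.eq_or_lt_of_le h2 with rfl | hlt
  · exact hM
  · have hd0 : 0 < M - x := by omega
    have hdt : M - x < tval M S := by
      have := tval_pos M S
      omega
    have := (tval_min M S hd0 hdt).1
    have hx : M - (M - x) = x := by omega
    rwa [hx] at this

lemma tval_Icc {a b : ℕ} (ha : 1 ≤ a) (hab : a ≤ b) : tval b (Finset.Icc a b) = b - a + 1 := by
  rw [tval, Nat.find_eq_iff]
  constructor
  · refine ⟨by omega, Or.inl ?_⟩
    rw [Finset.mem_Icc]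
    omega
  · intro d hd
    rintro ⟨hd0, h | h⟩
    · apply h
      rw [Finset.mem_Icc]
      omega
    · omega

lemma pent_cross {k j : ℕ} (hk : 1 ≤ k) (hj : 1 ≤ j) (h : 3*k^2 = 3*j^2 + j + k) : False := by
  rcases le_or_gt k j with h1 | h1
  · nlinarith
  · nlinarith

lemma pent_same1 {k j : ℕ} (h : 3*k^2 + j = 3*j^2 + k) : j = k := by
  rcases lt_trichotomy j k with h1 | h1 | h1
  · nlinarith
  · exact h1
  · nlinarith

lemma pent_same2 {k j : ℕ} (h : 3*k^2 + k = 3*j^2 + j) : j = k := by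
  rcases lt_trichotomy j k with h1 | h1 | h1
  · nlinarith
  · exact h1
  · nlinarith

lemma pent_add1 {m k : ℕ} (h : 2*m = 3*k^2 - k) : 2*m + k = 3*k^2 := by
  have h2 : k ≤ 3*k^2 := by nlinarith
  omega

lemma pent_unique {m k j : ℕ} (hm : 1 ≤ m) (hk : 1 ≤ k) (hj : 1 ≤ j)
    (h1 : 2*m = 3*k^2 - k ∨ 2*m = 3*k^2 + k)
    (h2 : 2*m = 3*j^2 - j ∨ 2*m = 3*j^2 + j) : j = k := by
  rcases h1 with h1 | h1 <;> rcases h2 with h2 | h2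
  · have e1 := pent_add1 h1
    have e2 := pent_add1 h2
    exact pent_same1 (by omega)
  · have e1 := pent_add1 h1
    exact absurd (by omega : 3*k^2 = 3*j^2 + j + k) (fun h => pent_cross hk hj h)
  · have e2 := pent_add1 h2
    exact absurd (by omega : 3*j^2 = 3*k^2 + k + j) (fun h => pent_cross hj hk h)
  · exact pent_same2 (by omega)

lemma e_pent {m k : ℕ} (hm : 1 ≤ m) (hk : 1 ≤ k)
    (h : 2*m = 3*k^2 - k ∨ 2*m = 3*k^2 + k) : e m = (-1)^(k+1) := by
  rw [e, Finset.sum_eq_single_of_mem k]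
  · rw [if_pos h]
  · rw [Finset.mem_range]
    have h2 : 3*k ≤ 3*k^2 := by nlinarith
    rcases h with h | h <;> omega
  · intro b hb hbk
    rw [if_neg]
    intro hbad
    have hb1 : 1 ≤ b := by
      rcases Nat.eq_zero_or_pos b with rfl | hb1
      · simp at hbad
        omega
      · exact hb1
    exact hbk (pent_unique hm hk hb1 h hbad)

lemma e_nonpent {m : ℕ} (hm : 1 ≤ m)
    (h : ∀ k, 1 ≤ k → ¬(2*m = 3*k^2 - k ∨ 2*m = 3*k^2 + k)) : e m = 0 := by
  rw [e]
  apply Finset.sum_eq_zero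
  intro k hk
  rw [if_neg]
  intro hbad
  rcases Nat.eq_zero_or_pos k with rfl | hk1
  · simp at hbad
    omega
  · exact h k hk1 hbad

lemma caseA {m : ℕ} {S : Finset ℕ} (hm : 1 ≤ m)
    (hsub : S ⊆ Finset.Icc 1 m) (hsum : S.sum id = m)
    (hS : S.Nonempty) (hnexc : ¬ Exc S)
    (hcase : S.min' hS ≤ tval (S.max' hS) S) :
    g S ⊆ Finset.Icc 1 m ∧ (g S).sum id = m ∧ ¬ Exc (g S) ∧
      (g S).card + 1 = S.card ∧ g (g S) = S := by
  set M := S.max' hS with hMdef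
  set s := S.min' hS with hsdef
  set t := tval M S with htdef
  have h0 : (0:ℕ) ∉ S := fun h => by simpa using (hsub h)
  have hMS : M ∈ S := S.max'_mem hS
  have hsS : s ∈ S := S.min'_mem hS
  have hmem_le : ∀ x ∈ S, x ≤ M := fun x hx => S.le_max' x hx
  have hmem_ge : ∀ x ∈ S, s ≤ x := fun x hx => S.min'_le x hx
  have hs1 : 1 ≤ s := by
    have := hsub hsS
    rw [Finset.mem_Icc] at this
    omega
  have hsM : s ≤ M := hmem_le s hsS
  have hMm : M ≤ m := by
    have := hsub hMS
    rw [Finset.mem_Icc] at this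
    omega
  have ht1 : 0 < t := tval_pos M S
  have htM : t ≤ M := tval_le S h0 (by omega)
  have hstair : ∀ x, M - t < x → x ≤ M → x ∈ S := fun x h1 h2 => tval_stair hMS h1 h2
  -- A1 : 2*s ≤ M
  have hA1 : 2*s ≤ M := by
    by_contra hA1
    push_neg at hA1
    have hSicc : S = Finset.Icc s M := by
      apply Finset.Subset.antisymm
      · intro x hx
        rw [Finset.mem_Icc]
        exact ⟨hmem_ge x hx, hmem_le x hx⟩
      · intro x hx
        rw [Finset.mem_Icc] at hx
        exact hstair x (by omega) hx.2
    have htle : t ≤ M - s + 1 := by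
      rw [htdef, tval]
      apply Nat.find_le
      refine ⟨by omega, Or.inl fun hc => ?_⟩
      have := hmem_ge _ hc
      omega
    refine hnexc ⟨s, hs1, Or.inl ?_⟩
    rw [hSicc]
    have hMeq : M = 2*s - 1 := by omega
    rw [hMeq]
  have hA3 : M - s + 1 ∈ S := hstair _ (by omega) (by omega)
  have hA7 : M - s + 1 ∈ S.erase s := Finset.mem_erase.mpr ⟨by omega, hA3⟩
  have hA6 : M + 1 ∉ (S.erase s).erase (M - s + 1) := by
    intro h
    have := hmem_le _ (Finset.mem_of_mem_erase (Finset.mem_of_mem_erase h))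
    omega
  have hgA : g S = Amove S M s := g_eq_A hS hcase
  set S' := Amove S M s with hS'def
  have hS'mem : ∀ x, x ∈ S' ↔ (x = M + 1 ∨ (x ≠ M - s + 1 ∧ x ≠ s ∧ x ∈ S)) := by
    intro x
    rw [hS'def, Amove, Finset.mem_insert, Finset.mem_erase, Finset.mem_erase]
  have hS'ne : S'.Nonempty := ⟨M+1, (hS'mem _).mpr (Or.inl rfl)⟩
  have hcard : S'.card + 1 = S.card := by
    have c1 := Finset.card_erase_add_one hA7
    have c2 := Finset.card_erase_add_one hsS
    have c3 : S'.card = ((S.erase s).erase (M-s+1)).card + 1 := by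
      rw [hS'def, Amove, Finset.card_insert_of_notMem hA6]
    omega
  have hsum' : S'.sum id = m := by
    have e1 : S'.sum id = (M+1) + ((S.erase s).erase (M-s+1)).sum id := by
      rw [hS'def, Amove, Finset.sum_insert hA6]
      rfl
    have e2 : ((S.erase s).erase (M-s+1)).sum id + (M-s+1) = (S.erase s).sum id :=
      Finset.sum_erase_add _ _ hA7
    have e3 : (S.erase s).sum id + s = S.sum id := Finset.sum_erase_add _ _ hsS
    omega
  have hsm : s + M ≤ m := by
    have h1 : ({s, M} : Finset ℕ) ⊆ S := by
      intro x hx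
      rcases Finset.mem_insert.mp hx with rfl | hx
      · exact hsS
      · rw [Finset.mem_singleton] at hx
        subst hx
        exact hMS
    have h2 := Finset.sum_le_sum_of_subset (f := id) h1
    rw [Finset.sum_pair (by omega : s ≠ M)] at h2
    simp only [id_eq] at h2
    have hsum0 : (∑ x ∈ S, x) = m := hsum
    omega
  have hsub' : S' ⊆ Finset.Icc 1 m := by
    intro x hx
    rcases (hS'mem x).mp hx with rfl | hx
    · rw [Finset.mem_Icc]
      omega
    · exact hsub hx.2.2
  have hmax' : ∀ x ∈ S', x ≤ M + 1 := by
    intro x hx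
    rcases (hS'mem x).mp hx with rfl | hx
    · omega
    · have := hmem_le x hx.2.2
      omega
  have hmaxmem : M + 1 ∈ S' := (hS'mem _).mpr (Or.inl rfl)
  have hmin' : ∀ x ∈ S', s + 1 ≤ x := by
    intro x hx
    rcases (hS'mem x).mp hx with rfl | hx
    · omega
    · have := hmem_ge x hx.2.2
      have := hx.2.1
      omega
  have hmax'eq : S'.max' hS'ne = M + 1 :=
    le_antisymm (Finset.max'_le _ _ _ hmax') (Finset.le_max' _ _ hmaxmem)
  have htv' : tval (M+1) S' = s := by
    rw [tval, Nat.find_eq_iff]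
    constructor
    · refine ⟨by omega, Or.inl ?_⟩
      have hq : M + 1 - s = M - s + 1 := by omega
      rw [hq]
      intro hmem
      rcases (hS'mem _).mp hmem with h | h
      · omega
      · exact h.1 rfl
    · rintro d hd ⟨hd0, hor⟩
      rcases hor with hor | hor
      · apply hor
        have hx1 : M - t < M + 1 - d := by omega
        have hx2 : M + 1 - d ≤ M := by omega
        have hxS : M + 1 - d ∈ S := hstair _ hx1 hx2
        exact (hS'mem _).mpr (Or.inr ⟨by omega, by omega, hxS⟩)
      · omega
  have hnexc' : ¬ Exc S' := by
    rintro ⟨a, ha1, hc | hc⟩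
    · have hmm : M + 1 ∈ Finset.Icc a (2*a-1) := hc ▸ hmaxmem
      rw [Finset.mem_Icc] at hmm
      have h2a : 2*a - 1 ∈ S' := by
        rw [hc, Finset.mem_Icc]
        omega
      have h2b := hmax' _ h2a
      have heq : 2*a - 1 = M + 1 := by omega
      have hth := htv'
      rw [hc, ← heq] at hth
      rw [tval_Icc ha1 (by omega)] at hth
      omega
    · have hmm : M + 1 ∈ Finset.Icc (a+1) (2*a) := hc ▸ hmaxmem
      rw [Finset.mem_Icc] at hmm
      have h2a : 2*a ∈ S' := by
        rw [hc, Finset.mem_Icc]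
        omega
      have h2b := hmax' _ h2a
      have heq : 2*a = M + 1 := by omega
      have hth := htv'
      rw [hc, ← heq] at hth
      rw [tval_Icc (by omega) (by omega)] at hth
      omega
  have hminb : s + 1 ≤ S'.min' hS'ne := Finset.le_min' _ _ _ hmin'
  have hbranch : ¬ (S'.min' hS'ne ≤ tval (S'.max' hS'ne) S') := by
    rw [hmax'eq, htv']
    omega
  have hgg : g S' = S := by
    rw [g_eq_B hS'ne hbranch, hmax'eq, htv', Bmove]
    have hq : M + 1 - s = M - s + 1 := by omega
    rw [hq]
    have her : S'.erase (M+1) = (S.erase s).erase (M-s+1) := by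
      rw [hS'def, Amove, Finset.erase_insert hA6]
    rw [her, Finset.insert_erase hA7, Finset.insert_erase hsS]
  rw [hgA]
  exact ⟨hsub', hsum', hnexc', hcard, hgg⟩

lemma caseB {m : ℕ} {S : Finset ℕ} (hm : 1 ≤ m)
    (hsub : S ⊆ Finset.Icc 1 m) (hsum : S.sum id = m)
    (hS : S.Nonempty) (hnexc : ¬ Exc S)
    (hcase : ¬ S.min' hS ≤ tval (S.max' hS) S) :
    g S ⊆ Finset.Icc 1 m ∧ (g S).sum id = m ∧ ¬ Exc (g S) ∧
      (g S).card = S.card + 1 ∧ g (g S) = S := by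
  set M := S.max' hS with hMdef
  set s := S.min' hS with hsdef
  set t := tval M S with htdef
  have hcase0 := hcase
  push_neg at hcase
  have h0 : (0:ℕ) ∉ S := fun h => by simpa using (hsub h)
  have hMS : M ∈ S := S.max'_mem hS
  have hsS : s ∈ S := S.min'_mem hS
  have hmem_le : ∀ x ∈ S, x ≤ M := fun x hx => S.le_max' x hx
  have hmem_ge : ∀ x ∈ S, s ≤ x := fun x hx => S.min'_le x hx
  have hs1 : 1 ≤ s := by
    have := hsub hsS
    rw [Finset.mem_Icc] at this
    omega
  have hsM : s ≤ M := hmem_le s hsS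
  have hMm : M ≤ m := by
    have := hsub hMS
    rw [Finset.mem_Icc] at this
    omega
  have ht1 : 0 < t := tval_pos M S
  have htM : t ≤ M := tval_le S h0 (by omega)
  have htnm : (M - t) ∉ S := tval_notMem S h0 (by omega)
  have hstair : ∀ x, M - t < x → x ≤ M → x ∈ S := fun x h1 h2 => tval_stair hMS h1 h2
  have hB0 : M - t + 1 ∈ S := hstair _ (by omega) (by omega)
  have hst : s ≤ M - t + 1 := hmem_ge _ hB0
  have hB1 : 2*t < M := by
    by_contra hB1
    push_neg at hB1
    have hMeq : M = 2*t ∧ s = t + 1 := by omega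
    have hSicc : S = Finset.Icc s M := by
      apply Finset.Subset.antisymm
      · intro x hx
        rw [Finset.mem_Icc]
        exact ⟨hmem_ge x hx, hmem_le x hx⟩
      · intro x hx
        rw [Finset.mem_Icc] at hx
        exact hstair x (by omega) hx.2
    refine hnexc ⟨t, by omega, Or.inr ?_⟩
    rw [hSicc, hMeq.1, hMeq.2]
  have htnS : t ∉ S := fun h => by have := hmem_ge t h; omega
  have hB4 : t ∉ insert (M - t) (S.erase M) := by
    intro h
    rcases Finset.mem_insert.mp h with h | h
    · omega
    · exact htnS (Finset.mem_of_mem_erase h)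
  have hB5 : M - t ∉ S.erase M := fun h => htnm (Finset.mem_of_mem_erase h)
  have hgB : g S = Bmove S M t := g_eq_B hS hcase0
  set S' := Bmove S M t with hS'def
  have hS'mem : ∀ x, x ∈ S' ↔ (x = t ∨ x = M - t ∨ (x ≠ M ∧ x ∈ S)) := by
    intro x
    rw [hS'def, Bmove, Finset.mem_insert, Finset.mem_insert, Finset.mem_erase]
  have hS'ne : S'.Nonempty := ⟨t, (hS'mem _).mpr (Or.inl rfl)⟩
  have hcard : S'.card = S.card + 1 := by
    have c1 := Finset.card_erase_add_one hMS
    have c2 : (insert (M-t) (S.erase M)).card = (S.erase M).card + 1 :=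
      Finset.card_insert_of_notMem hB5
    have c3 : S'.card = (insert (M-t) (S.erase M)).card + 1 := by
      rw [hS'def, Bmove, Finset.card_insert_of_notMem hB4]
    omega
  have hsum' : S'.sum id = m := by
    have e1 : S'.sum id = t + (insert (M-t) (S.erase M)).sum id := by
      rw [hS'def, Bmove, Finset.sum_insert hB4]
      rfl
    have e2 : (insert (M-t) (S.erase M)).sum id = (M-t) + (S.erase M).sum id := by
      rw [Finset.sum_insert hB5]
      rfl
    have e3 : (S.erase M).sum id + M = S.sum id := Finset.sum_erase_add _ _ hMS
    omega
  have hsub' : S' ⊆ Finset.Icc 1 m := by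
    intro x hx
    rcases (hS'mem x).mp hx with rfl | h | h
    · rw [Finset.mem_Icc]; omega
    · rw [Finset.mem_Icc]; omega
    · exact hsub h.2
  have hmax' : ∀ x ∈ S', x ≤ M - 1 := by
    intro x hx
    rcases (hS'mem x).mp hx with rfl | h | h
    · omega
    · omega
    · have := hmem_le x h.2
      have := h.1
      omega
  have hmaxmem : M - 1 ∈ S' := by
    by_cases ht1' : t = 1
    · exact (hS'mem _).mpr (Or.inr (Or.inl (by omega)))
    · have hxS : M - 1 ∈ S := hstair _ (by omega) (by omega)
      exact (hS'mem _).mpr (Or.inr (Or.inr ⟨by omega, hxS⟩))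
  have hmin' : ∀ x ∈ S', t ≤ x := by
    intro x hx
    rcases (hS'mem x).mp hx with rfl | h | h
    · omega
    · omega
    · have := hmem_ge x h.2
      omega
  have hminmem : t ∈ S' := (hS'mem _).mpr (Or.inl rfl)
  have hmax'eq : S'.max' hS'ne = M - 1 :=
    le_antisymm (Finset.max'_le _ _ _ hmax') (Finset.le_max' _ _ hmaxmem)
  have hmin'eq : S'.min' hS'ne = t :=
    le_antisymm (Finset.min'_le _ _ hminmem) (Finset.le_min' _ _ _ hmin')
  have hbranch : S'.min' hS'ne ≤ tval (S'.max' hS'ne) S' := by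
    rw [hmax'eq, hmin'eq, tval, Nat.le_find_iff]
    rintro d hd ⟨hd0, hor⟩
    rcases hor with hor | hor
    · apply hor
      by_cases hx : d = t - 1
      · exact (hS'mem _).mpr (Or.inr (Or.inl (by omega)))
      · have hxS : M - 1 - d ∈ S := hstair _ (by omega) (by omega)
        exact (hS'mem _).mpr (Or.inr (Or.inr ⟨by omega, hxS⟩))
    · omega
  have hnexc' : ¬ Exc S' := by
    rintro ⟨a, ha1, hc | hc⟩
    · have h1 : t ∈ Finset.Icc a (2*a-1) := hc ▸ hminmem
      have h2 : M - 1 ∈ Finset.Icc a (2*a-1) := hc ▸ hmaxmem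
      have h3 : a ∈ S' := by
        rw [hc, Finset.mem_Icc]
        omega
      have h4 : 2*a - 1 ∈ S' := by
        rw [hc, Finset.mem_Icc]
        omega
      have h5 := hmin' _ h3
      have h6 := hmax' _ h4
      rw [Finset.mem_Icc] at h1 h2
      omega
    · have h1 : t ∈ Finset.Icc (a+1) (2*a) := hc ▸ hminmem
      have h2 : M - 1 ∈ Finset.Icc (a+1) (2*a) := hc ▸ hmaxmem
      have h3 : a + 1 ∈ S' := by
        rw [hc, Finset.mem_Icc]
        omega
      have h4 : 2*a ∈ S' := by
        rw [hc, Finset.mem_Icc]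
        omega
      have h5 := hmin' _ h3
      have h6 := hmax' _ h4
      rw [Finset.mem_Icc] at h1 h2
      omega
  have hgg : g S' = S := by
    rw [g_eq_A hS'ne hbranch, hmax'eq, hmin'eq, Amove]
    have hq1 : M - 1 + 1 = M := by omega
    have hq2 : M - 1 - t + 1 = M - t := by omega
    rw [hq1, hq2]
    have her1 : S'.erase t = insert (M-t) (S.erase M) := by
      rw [hS'def, Bmove, Finset.erase_insert hB4]
    rw [her1, Finset.erase_insert hB5, Finset.insert_erase hMS]
  rw [hgB]
  exact ⟨hsub', hsum', hnexc', hcard, hgg⟩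

noncomputable instance : DecidablePred Exc := Classical.decPred _

lemma unpack {m : ℕ} {S : Finset ℕ} (hm : 1 ≤ m)
    (h : S ∈ ((Finset.Icc 1 m).powerset.filter (fun S => S.sum id = m)).filter
      (fun S => ¬ Exc S)) :
    g S ∈ ((Finset.Icc 1 m).powerset.filter (fun S => S.sum id = m)).filter
      (fun S => ¬ Exc S) ∧
      ((g S).card + 1 = S.card ∨ (g S).card = S.card + 1) ∧ g (g S) = S := by
  rw [Finset.mem_filter, Finset.mem_filter, Finset.mem_powerset] at h
  obtain ⟨⟨hsub, hsum⟩, hnexc⟩ := h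
  have hS : S.Nonempty := by
    rcases Finset.eq_empty_or_nonempty S with rfl | h
    · rw [Finset.sum_empty] at hsum
      omega
    · exact h
  by_cases hbr : S.min' hS ≤ tval (S.max' hS) S
  · obtain ⟨h1, h2, h3, h4, h5⟩ := caseA hm hsub hsum hS hnexc hbr
    exact ⟨by rw [Finset.mem_filter, Finset.mem_filter, Finset.mem_powerset]
              exact ⟨⟨h1, h2⟩, h3⟩, Or.inl h4, h5⟩
  · obtain ⟨h1, h2, h3, h4, h5⟩ := caseB hm hsub hsum hS hnexc hbr
    exact ⟨by rw [Finset.mem_filter, Finset.mem_filter, Finset.mem_powerset]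
              exact ⟨⟨h1, h2⟩, h3⟩, Or.inr h4, h5⟩

lemma franklin_nonexc (m : ℕ) (hm : 1 ≤ m) :
    ∑ S ∈ ((Finset.Icc 1 m).powerset.filter (fun S => S.sum id = m)).filter
      (fun S => ¬ Exc S), (-1:ℤ)^S.card = 0 := by
  apply Finset.sum_involution (fun S _ => g S)
  · intro S hSm
    obtain ⟨-, hcard, -⟩ := unpack hm hSm
    rcases hcard with h | h
    · rw [← h, pow_succ]
      ring
    · rw [h, pow_succ]
      ring
  · intro S hSm _
    obtain ⟨-, hcard, -⟩ := unpack hm hSm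
    intro he
    rw [he] at hcard
    omega
  · intro S hSm
    exact (unpack hm hSm).1
  · intro S hSm
    exact (unpack hm hSm).2.2

lemma sum_Icc2 (a b : ℕ) (h : a ≤ b) : 2 * (Finset.Icc a b).sum id = (a+b)*(b-a+1) := by
  induction b with
  | zero =>
    have : a = 0 := by omega
    subst this
    decide
  | succ n ih =>
    rcases Nat.lt_or_ge n a with h2 | h2
    · have : a = n+1 := by omega
      subst this
      rw [Finset.Icc_self, Finset.sum_singleton]
      have h3 : n + 1 - (n+1) + 1 = 1 := by omega
      rw [h3, mul_one]
      simp only [id_eq]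
      ring
    · obtain ⟨c, rfl⟩ : ∃ c, n = a + c := ⟨n - a, by omega⟩
      rw [← Finset.insert_Icc_right_eq_Icc_add_one (by omega), Finset.sum_insert (by simp)]
      have h3 : a + c + 1 - a + 1 = c + 2 := by omega
      have h4 : a + c - a + 1 = c + 1 := by omega
      have ih' := ih (by omega)
      rw [h4] at ih'
      rw [h3, Nat.mul_add, ih']
      simp only [id_eq]
      ring

lemma sum_Icc_type1 {a : ℕ} (ha : 1 ≤ a) :
    2 * (Finset.Icc a (2*a-1)).sum id + a = 3*a^2 := by
  have h2 := sum_Icc2 a (2*a-1) (by omega)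
  have h4 : a + (2*a-1) = 3*a-1 := by omega
  have h5 : (2*a-1) - a + 1 = a := by omega
  rw [h4, h5] at h2
  have h7 : (3*a-1)*a = 3*a*a - a := by rw [Nat.sub_mul, one_mul]
  have h8 : 3*a*a = 3*a^2 := by ring
  have h9 : a ≤ 3*a*a := by nlinarith
  omega

lemma sum_Icc_type2 {a : ℕ} (ha : 1 ≤ a) :
    2 * (Finset.Icc (a+1) (2*a)).sum id = 3*a^2 + a := by
  have h2 := sum_Icc2 (a+1) (2*a) (by omega)
  have h4 : (a+1) + 2*a = 3*a+1 := by omega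
  have h5 : 2*a - (a+1) + 1 = a := by omega
  rw [h4, h5] at h2
  have h6 : (3*a+1)*a = 3*a^2 + a := by ring
  omega

lemma exc_sum (m : ℕ) (hm : 1 ≤ m) :
    ∑ S ∈ ((Finset.Icc 1 m).powerset.filter (fun S => S.sum id = m)).filter
      (fun S => Exc S), (-1:ℤ)^S.card = - e m := by
  by_cases hp : ∃ k, 1 ≤ k ∧ (2*m = 3*k^2 - k ∨ 2*m = 3*k^2 + k)
  · obtain ⟨k, hk1, hk⟩ := hp
    have he := e_pent hm hk1 hk
    rcases hk with hk | hk
    · have e1 : 2*m + k = 3*k^2 := pent_add1 hk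
      have hsingle : ((Finset.Icc 1 m).powerset.filter (fun S => S.sum id = m)).filter
          (fun S => Exc S) = {Finset.Icc k (2*k-1)} := by
        ext S
        rw [Finset.mem_filter, Finset.mem_filter, Finset.mem_powerset, Finset.mem_singleton]
        constructor
        · rintro ⟨⟨hsub', hsum'⟩, a, ha1, hc | hc⟩
          · rw [hc] at hsum'
            have st1 := sum_Icc_type1 ha1
            have hak : a = k := pent_same1 (by omega)
            rw [hc, hak]
          · rw [hc] at hsum'
            have st2 := sum_Icc_type2 ha1
            exact absurd (by omega : 3*k^2 = 3*a^2 + a + k) (fun h => pent_cross hk1 ha1 h)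
        · rintro rfl
          have h9 : 5*k ≤ 3*k^2 + 2 := by
            rcases Nat.lt_or_ge k 2 with h | h
            · have hk' : k = 1 := by omega
              subst hk'
              norm_num
            · have h10 : 3*k*2 ≤ 3*k*k := Nat.mul_le_mul_left _ h
              have h11 : 3*k*k = 3*k^2 := by ring
              omega
          have st1 := sum_Icc_type1 hk1
          refine ⟨⟨Finset.Icc_subset_Icc (by omega) (by omega), by omega⟩,
            ⟨k, hk1, Or.inl rfl⟩⟩
      rw [hsingle, Finset.sum_singleton, Nat.card_Icc]
      have hc : 2*k - 1 + 1 - k = k := by omega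
      rw [hc, he, pow_succ]
      ring
    · have hsingle : ((Finset.Icc 1 m).powerset.filter (fun S => S.sum id = m)).filter
          (fun S => Exc S) = {Finset.Icc (k+1) (2*k)} := by
        ext S
        rw [Finset.mem_filter, Finset.mem_filter, Finset.mem_powerset, Finset.mem_singleton]
        constructor
        · rintro ⟨⟨hsub', hsum'⟩, a, ha1, hc | hc⟩
          · rw [hc] at hsum'
            have st1 := sum_Icc_type1 ha1
            exact absurd (by omega : 3*a^2 = 3*k^2 + k + a) (fun h => pent_cross ha1 hk1 h)
          · rw [hc] at hsum'
            have st2 := sum_Icc_type2 ha1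
            have hak : a = k := pent_same2 (by omega)
            rw [hc, hak]
        · rintro rfl
          have h9 : 3*k ≤ 3*k^2 := by nlinarith
          have st2 := sum_Icc_type2 hk1
          refine ⟨⟨Finset.Icc_subset_Icc (by omega) (by omega), by omega⟩,
            ⟨k, hk1, Or.inr rfl⟩⟩
      rw [hsingle, Finset.sum_singleton, Nat.card_Icc]
      have hc : 2*k + 1 - (k+1) = k := by omega
      rw [hc, he, pow_succ]
      ring
  · push_neg at hp
    have hempty : ((Finset.Icc 1 m).powerset.filter (fun S => S.sum id = m)).filter
        (fun S => Exc S) = ∅ := by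
      rw [Finset.eq_empty_iff_forall_notMem]
      intro S hmem
      rw [Finset.mem_filter, Finset.mem_filter, Finset.mem_powerset] at hmem
      obtain ⟨⟨hsub', hsum'⟩, a, ha1, hc | hc⟩ := hmem
      · rw [hc] at hsum'
        have st1 := sum_Icc_type1 ha1
        exact (hp a ha1).1 (by omega)
      · rw [hc] at hsum'
        have st2 := sum_Icc_type2 ha1
        exact (hp a ha1).2 (by omega)
    rw [hempty, Finset.sum_empty,
      e_nonpent hm (fun k hk h => by rcases h with h | h
                                     exacts [(hp k hk).1 h, (hp k hk).2 h]),
      neg_zero]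

lemma pc_eq (i : ℕ) : pc i = - e i := by
  rcases Nat.eq_zero_or_pos i with rfl | hi
  · decide
  · rw [pc, ← Finset.sum_filter_add_sum_filter_not
      ((Finset.Icc 1 i).powerset.filter (fun S => S.sum id = i)) (fun S => Exc S),
      franklin_nonexc i hi, add_zero, exc_sum i hi]

theorem e_recurrence (n : ℕ) (hn : 1 ≤ n) :
    (n : ℤ) * e n = - ∑ i ∈ Finset.range n, (sigma (n - i) : ℤ) * e i := by
  have h1 := pc_rec n hn
  have h2 : ∑ i ∈ Finset.range n, (sigma (n-i) : ℤ) * pc i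
      = - ∑ i ∈ Finset.range n, (sigma (n-i) : ℤ) * e i := by
    rw [← Finset.sum_neg_distrib]
    apply Finset.sum_congr rfl
    intro i _
    rw [pc_eq i]
    ring
  rw [pc_eq n, h2] at h1
  linarith
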